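/- arXiv:0909.3275 — 4 statements merged into one kernel-verified Lean document; each statement's English description precedes it below -/
import Mathlib

section
/- If μ is a nonzero complex number with μ² + μ⁻² = 2 − ω and μ + μ⁻¹ ≠ 0, then for every natural number n, τ_n = 2·(μ^{2n−1} + μ^{1−2n})/(μ + μ⁻¹) (integer powers of μ). -/
open Matrix

/-- The matrix `X = [[1,1],[0,1]]`. -/
noncomputable def Xmat : Matrix (Fin 2) (Fin 2) ℂ := !![1, 1; 0, 1]

/-- The matrix `Y = [[1,0],[ω,1]]`. -/
noncomputable def Ymat (ω : ℂ) : Matrix (Fin 2) (Fin 2) ℂ := !![1, 0; ω, 1]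

/-- `τ n` is the trace of `X ⬝ (Y ⬝ X⁻¹)^n`. -/
noncomputable def τ (ω : ℂ) (n : ℕ) : ℂ := (Xmat * (Ymat ω * Xmat⁻¹) ^ n).trace

lemma Xinv : Xmat⁻¹ = !![1, -1; 0, 1] := by
  apply inv_eq_right_inv
  ext i j
  fin_cases i <;> fin_cases j <;>
    simp [Xmat, Matrix.mul_fin_two, Matrix.one_fin_two]

lemma Msq (ω : ℂ) : (Ymat ω * Xmat⁻¹) ^ 2 = (2 - ω) • (Ymat ω * Xmat⁻¹) - 1 := by
  rw [Xinv]
  ext i j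
  fin_cases i <;> fin_cases j <;>
    simp [Ymat, pow_two, Matrix.mul_fin_two, Matrix.one_fin_two] <;> ring

lemma tau_rec (ω : ℂ) (n : ℕ) : τ ω (n + 2) = (2 - ω) * τ ω (n + 1) - τ ω n := by
  simp only [τ, pow_add, Msq, Matrix.mul_sub, Matrix.mul_smul, Matrix.mul_one,
    Matrix.trace_sub, Matrix.trace_smul, smul_eq_mul, pow_one, ← Matrix.mul_assoc]

lemma tau0 (ω : ℂ) : τ ω 0 = 2 := by
  simp [τ, Xmat, Matrix.trace_fin_two_of]
  norm_num

lemma tau1 (ω : ℂ) : τ ω 1 = 2 := by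
  simp only [τ, pow_one, Xinv]
  simp [Xmat, Ymat, Matrix.mul_fin_two, Matrix.trace_fin_two_of]
  ring

lemma alg (μ a c : ℂ) (hμ : μ ≠ 0) :
    (μ^2 + μ⁻¹^2) * (2 * (a * μ^2 + c * μ⁻¹^2)) - 2 * (a + c)
      = 2 * (a * μ^2 * μ^2 + c * μ⁻¹^2 * μ⁻¹^2) := by
  field_simp
  ring

theorem tau_closed_form (ω μ : ℂ) (hμ : μ ≠ 0)
    (hchar : μ ^ 2 + μ⁻¹ ^ 2 = 2 - ω) (hden : μ + μ⁻¹ ≠ 0) :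
    ∀ n : ℕ,
      τ ω n = 2 * (μ ^ (2 * (n : ℤ) - 1) + μ ^ (1 - 2 * (n : ℤ))) / (μ + μ⁻¹) := by
  intro n
  induction n using Nat.twoStepInduction with
  | zero =>
      rw [tau0]
      norm_num
      rw [add_comm (μ⁻¹), mul_div_assoc, div_self hden, mul_one]
  | one =>
      rw [tau1]
      norm_num
      rw [mul_div_assoc, div_self hden, mul_one]
  | more n ih ih2 =>
      rw [tau_rec, ih2, ih, ← hchar]
      push_cast
      have e1 : 2 * ((n:ℤ) + 2) - 1 = (2 * n - 1) + 2 + 2 := by ring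
      have e2 : 1 - 2 * ((n:ℤ) + 2) = -(2 * n - 1) - 2 - 2 := by ring
      have e3 : 2 * ((n:ℤ) + 1) - 1 = (2 * n - 1) + 2 := by ring
      have e4 : 1 - 2 * ((n:ℤ) + 1) = -(2 * n - 1) - 2 := by ring
      have e5 : (1:ℤ) - 2 * n = -(2 * n - 1) := by ring
      rw [e1, e2, e3, e4, e5]
      generalize (2 * (n:ℤ) - 1) = k
      have p1 : ∀ m : ℤ, μ ^ (m + 2) = μ ^ m * μ ^ 2 := by
        intro m
        rw [zpow_add₀ hμ, show ((2:ℤ)) = ((2:ℕ):ℤ) by norm_num, zpow_natCast]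
      have p2 : ∀ m : ℤ, μ ^ (m - 2) = μ ^ m * μ⁻¹ ^ 2 := by
        intro m
        rw [zpow_sub₀ hμ, show ((2:ℤ)) = ((2:ℕ):ℤ) by norm_num, zpow_natCast,
          inv_pow, div_eq_mul_inv]
      simp only [p1, p2]
      have h := alg μ (μ ^ k) (μ ^ (-k)) hμ
      rw [← mul_div_assoc, ← sub_div]
      congr 1
end

section
/- Let p > q ≥ 2 be integers and let r, s be integers with r·p + s·q = 1. Then for every integer n, the normal closure of the single element μ_n = x·a^{−n} in G is the whole group G; that is, each μ_n is a killer (normal generator) of the (p,q)-torus knot group. -/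
/-!
Modulo the normal closure `N` of `μ_n` we have `x = a^n`, so `u = a x^q` lies in the cyclic
subgroup generated by `a`, and so does `v = (v^r)^p (v^q)^s = (u^{-s} x)^p (u^p)^s`. Hence
`G/N` is cyclic, in particular abelian. In an abelian image of `G` the relation `u^p = v^q`
together with `rp + sq = 1` gives `x^q = u`, i.e. `a = 1`; then `x = a^n = 1` and `u = v = 1`.
-/

/-- The single relator `u^p * v^{-q}` of the `(p,q)`-torus knot group, in the free
group on two generators (`FreeGroup.of 0 = u`, `FreeGroup.of 1 = v`). -/
def torusRels (p q : ℤ) : Set (FreeGroup (Fin 2)) :=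
  {FreeGroup.of 0 ^ p * FreeGroup.of 1 ^ (-q)}

/-- The `(p,q)`-torus knot group `⟨u, v ∣ u^p = v^q⟩`. -/
abbrev TorusKnotGroup (p q : ℤ) := PresentedGroup (torusRels p q)

/-- The generator `u`. -/
def u (p q : ℤ) : TorusKnotGroup p q := PresentedGroup.of 0

/-- The generator `v`. -/
def v (p q : ℤ) : TorusKnotGroup p q := PresentedGroup.of 1

/-- The element `x = u^s * v^r`. -/
def xelt (p q r s : ℤ) : TorusKnotGroup p q := u p q ^ s * v p q ^ r

/-- The element `a = u * x^{-q}`. -/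
def aelt (p q r s : ℤ) : TorusKnotGroup p q := u p q * xelt p q r s ^ (-q)

/-- The element `μ_n = x * a^{-n}`. -/
def μ (p q r s n : ℤ) : TorusKnotGroup p q := xelt p q r s * aelt p q r s ^ (-n)

section TorusRelation

variable {G : Type*} [Group G] {U V : G} {p q r s : ℤ}

theorem Commute.zpow_mul_zpow_zpow_left (hUV : Commute U V) (hrel : U ^ p = V ^ q)
    (hrs : r * p + s * q = 1) : (U ^ s * V ^ r) ^ q = U := by
  rw [(hUV.zpow_zpow s r).mul_zpow, ← zpow_mul, ← zpow_mul, mul_comm r, zpow_mul V, ← hrel,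
    ← zpow_mul, ← zpow_add, show s * q + p * r = 1 by linear_combination hrs, zpow_one]

theorem Commute.zpow_mul_zpow_zpow_right (hUV : Commute U V) (hrel : U ^ p = V ^ q)
    (hrs : r * p + s * q = 1) : (U ^ s * V ^ r) ^ p = V := by
  rw [(hUV.zpow_zpow s r).mul_zpow, ← zpow_mul, ← zpow_mul, mul_comm s, zpow_mul U, hrel,
    ← zpow_mul, ← zpow_add, show q * s + r * p = 1 by linear_combination hrs, zpow_one]

theorem commute_of_zpow_mul_zpow_eq_zpow (hrel : U ^ p = V ^ q) (hrs : r * p + s * q = 1)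
    {n : ℤ} (hx : U ^ s * V ^ r = (U * (U ^ s * V ^ r) ^ (-q)) ^ n) : Commute U V := by
  set X := U ^ s * V ^ r with hX
  set A := U * X ^ (-q)
  have hXA : X ∈ Subgroup.zpowers A := hx ▸ Subgroup.zpow_mem_zpowers A n
  have hUA : U ∈ Subgroup.zpowers A := by
    have hU : U = A * X ^ q := by simp [A]
    rw [hU]
    exact mul_mem (Subgroup.mem_zpowers A) (zpow_mem hXA q)
  have hVA : V ∈ Subgroup.zpowers A := by
    have hV : V = (U ^ (-s) * X) ^ p * (U ^ p) ^ s := by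
      rw [hrel, hX, zpow_neg, inv_mul_cancel_left, ← zpow_mul, ← zpow_mul, ← zpow_add,
        mul_comm q, hrs, zpow_one]
    rw [hV]
    exact mul_mem (zpow_mem (mul_mem (zpow_mem hUA _) hXA) p) (zpow_mem (zpow_mem hUA p) s)
  obtain ⟨k, hk⟩ := Subgroup.mem_zpowers_iff.mp hUA
  obtain ⟨l, hl⟩ := Subgroup.mem_zpowers_iff.mp hVA
  rw [← hk, ← hl]
  exact Commute.zpow_zpow_self A k l

theorem eq_one_of_zpow_mul_zpow_eq_zpow (hrel : U ^ p = V ^ q) (hrs : r * p + s * q = 1)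
    {n : ℤ} (hx : U ^ s * V ^ r = (U * (U ^ s * V ^ r) ^ (-q)) ^ n) : U = 1 ∧ V = 1 := by
  have hUV := commute_of_zpow_mul_zpow_eq_zpow hrel hrs hx
  have hA : U * (U ^ s * V ^ r) ^ (-q) = 1 := by
    rw [zpow_neg, hUV.zpow_mul_zpow_zpow_left hrel hrs, mul_inv_cancel]
  rw [hA, one_zpow] at hx
  refine ⟨?_, ?_⟩
  · rw [← hUV.zpow_mul_zpow_zpow_left hrel hrs, hx, one_zpow]
  · rw [← hUV.zpow_mul_zpow_zpow_right hrel hrs, hx, one_zpow]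

end TorusRelation

theorem u_zpow_eq_v_zpow (p q : ℤ) : u p q ^ p = v p q ^ q := by
  have hrel : PresentedGroup.mk (torusRels p q) (FreeGroup.of 0 ^ p * FreeGroup.of 1 ^ (-q)) = 1 :=
    (QuotientGroup.eq_one_iff _).2 (Subgroup.subset_normalClosure rfl)
  rw [map_mul, map_zpow, map_zpow, zpow_neg, mul_inv_eq_one] at hrel
  exact hrel

theorem torus_mu_is_killer_general (p q r s : ℤ)
    (hrs : r * p + s * q = 1) (n : ℤ) :
    Subgroup.normalClosure ({μ p q r s n} : Set (TorusKnotGroup p q)) = ⊤ := by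
  set N := Subgroup.normalClosure ({μ p q r s n} : Set (TorusKnotGroup p q))
  let π := QuotientGroup.mk' N
  have hμ : π (μ p q r s n) = 1 :=
    (QuotientGroup.eq_one_iff _).2 (Subgroup.subset_normalClosure rfl)
  have hx : π (u p q) ^ s * π (v p q) ^ r
      = (π (u p q) * (π (u p q) ^ s * π (v p q) ^ r) ^ (-q)) ^ n := by
    simpa [μ, aelt, xelt, mul_inv_eq_one] using hμ
  obtain ⟨hu, hv⟩ := eq_one_of_zpow_mul_zpow_eq_zpow
    (by rw [← map_zpow, ← map_zpow, u_zpow_eq_v_zpow]) hrs hx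
  refine eq_top_iff.mpr fun g _ ↦ PresentedGroup.generated_by _ N (fun j ↦ ?_) g
  fin_cases j
  · exact (QuotientGroup.eq_one_iff _).1 hu
  · exact (QuotientGroup.eq_one_iff _).1 hv

theorem torus_mu_is_killer (p q r s : ℤ) (hpq : q < p) (hq : 2 ≤ q)
    (hrs : r * p + s * q = 1) (n : ℤ) :
    Subgroup.normalClosure ({μ p q r s n} : Set (TorusKnotGroup p q)) = ⊤ :=
  torus_mu_is_killer_general p q r s hrs n
end

section
/- Let p and q be coprime integers with p > q ≥ 2 and let r, s be integers with r·p + s·q = 1, |r| < q, and 1 < s < p. Then: (i) for every natural number n, the normal closure of μ_n in G is all of G; and (ii) for all natural numbers m ≠ n, μ_m and μ_n are not conjugate in G. In particular, the (p,q)-torus knot group contains infinitely many pairwise nonconjugate elements each of which normally generates the group. -/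
/-!
Part (i): modulo the normal closure of `μ_n` we have `x = a^n`, so `u = a x^q`, `x`,
`v^r = u^{-s} x` and `v^q = u^p` are powers of `a`; since `r` and `q` are coprime so is `v`, and
then the relations `x = u^s v^r` and `u^p = v^q` give two coprime exponents that kill `a`.

Part (ii): map onto `ℤ/p ∗ ℤ/q`. Conjugating `μ_n` by `u^s` gives
`v^r u^s (v^r x^{q-1} u^{s-1})^n`, whose image is a cyclically reduced word of `2 + 2qn` syllables
(the bounds on `r` and `s` make every syllable nontrivial). The `k`-th power of a cyclically
reduced word of `ℓ` syllables has `kℓ` syllables, while conjugating by a fixed element changes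
syllable length by a bounded amount, so `ℓ` is a conjugacy invariant.
-/

namespace Monoid.CoprodI

variable {ι : Type*} {M : ι → Type*} [∀ i, Monoid (M i)] [∀ i, DecidableEq (M i)]

namespace Word

theorem length_rcons_le {i : ι} (p : Pair M i) :
    (rcons p).toList.length ≤ p.tail.toList.length + 1 := by
  unfold rcons; split_ifs <;> simp

theorem length_tail_le_length_rcons {i : ι} (p : Pair M i) :
    p.tail.toList.length ≤ (rcons p).toList.length := by
  unfold rcons; split_ifs <;> simp

end Word

variable [DecidableEq ι]

namespace Word

theorem length_of_smul_le {i : ι} (m : M i) (w : Word M) :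
    (of m • w).toList.length ≤ w.toList.length + 1 := by
  have htail := length_tail_le_length_rcons (equivPair i w)
  rw [← equivPair_symm, Equiv.symm_apply_apply] at htail
  exact (length_rcons_le _).trans (Nat.add_le_add_right htail 1)

theorem length_smul_le (g : CoprodI M) (w : Word M) :
    (g • w).toList.length ≤ (equiv g).toList.length + w.toList.length := by
  have hlist : ∀ l : List (Σ i, M i),
      ((l.map fun x => of x.2).prod • w).toList.length ≤ l.length + w.toList.length := by
    intro l
    induction l with
    | nil => simp
    | cons x l ih =>
      rw [List.map_cons, List.prod_cons, mul_smul, List.length_cons]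
      have := length_of_smul_le x.2 ((l.map fun x => of x.2).prod • w)
      omega
  have hg : (equiv g).prod = g := equiv.symm_apply_apply g
  have := hlist (equiv g).toList
  change ((equiv g).prod • w).toList.length ≤ _ at this
  rwa [hg] at this

end Word

def syllableLength (g : CoprodI M) : ℕ := (Word.equiv g).toList.length

theorem syllableLength_mul_le (g h : CoprodI M) :
    syllableLength (g * h) ≤ syllableLength g + syllableLength h := by
  have hmul : (g * h) • Word.empty = g • h • (Word.empty : Word M) := mul_smul g h Word.empty
  unfold syllableLength
  simp only [Word.equiv, Equiv.coe_fn_mk, hmul]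
  exact Word.length_smul_le g _

def Prepends (g : CoprodI M) (i j : ι) (n : ℕ) : Prop :=
  ∀ w : Word M, w.fstIdx ≠ some j →
    (g • w).toList.length = w.toList.length + n ∧ (g • w).fstIdx ≠ some i

theorem prepends_of {i j : ι} {m : M j} (hm : m ≠ 1) (hij : i ≠ j) : Prepends (of m) i j 1 := by
  intro w hw
  rw [← Word.cons_eq_smul (h1 := hw) (h2 := hm), Word.fstIdx_cons]
  exact ⟨rfl, by simpa using hij.symm⟩

namespace Prepends

variable {g h : CoprodI M} {i j k : ι} {a b : ℕ}

theorem mul (hg : Prepends g i j a) (hh : Prepends h j k b) : Prepends (g * h) i k (a + b) := by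
  intro w hw
  obtain ⟨hlen, hidx⟩ := hh w hw
  obtain ⟨hlen', hidx'⟩ := hg (h • w) hidx
  rw [mul_smul]
  exact ⟨by omega, hidx'⟩

theorem pow (hg : Prepends g i i a) : ∀ n : ℕ, Prepends (g ^ n) i i (n * a)
  | 0 => fun w hw => by simpa using hw
  | n + 1 => by simpa [pow_succ, add_mul] using (pow hg n).mul hg

theorem syllableLength_eq (hg : Prepends g i j a) : syllableLength g = a := by
  simpa [syllableLength, Word.equiv, Word.fstIdx] using (hg Word.empty (by simp [Word.fstIdx])).1

end Prepends

section Group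

variable {G : ι → Type*} [∀ i, Group (G i)] [∀ i, DecidableEq (G i)]

theorem syllableLength_conj_le (c g : CoprodI G) :
    syllableLength (c * g * c⁻¹) ≤ syllableLength g + (syllableLength c + syllableLength c⁻¹) := by
  have h₁ := syllableLength_mul_le (c * g) c⁻¹
  have h₂ := syllableLength_mul_le c g
  omega

theorem Prepends.le_of_isConj {g h : CoprodI G} {i j : ι} {a b : ℕ} (hg : Prepends g i i a)
    (hh : Prepends h j j b) (hc : IsConj g h) : b ≤ a := by
  obtain ⟨c, rfl⟩ := isConj_iff.1 hc
  set C := syllableLength c + syllableLength c⁻¹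
  have hpow : (C + 1) * b ≤ (C + 1) * a + C := by
    rw [← (hh.pow (C + 1)).syllableLength_eq, ← (hg.pow (C + 1)).syllableLength_eq, conj_pow]
    exact syllableLength_conj_le c _
  by_contra! hab
  nlinarith

theorem Prepends.eq_of_isConj {g h : CoprodI G} {i j : ι} {a b : ℕ} (hg : Prepends g i i a)
    (hh : Prepends h j j b) (hc : IsConj g h) : a = b :=
  le_antisymm (hh.le_of_isConj hg hc.symm) (hg.le_of_isConj hh hc)

end Group

end Monoid.CoprodI

theorem Subgroup.mem_of_zpow_mem_of_isCoprime {G : Type*} [Group G] {H : Subgroup G} {g : G}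
    {m n : ℤ} (hmn : IsCoprime m n) (hm : g ^ m ∈ H) (hn : g ^ n ∈ H) : g ∈ H := by
  obtain ⟨a, b, hab⟩ := hmn
  have hg : g = (g ^ m) ^ a * (g ^ n) ^ b := by
    rw [← zpow_mul, ← zpow_mul, ← zpow_add, mul_comm m, mul_comm n, hab, zpow_one]
  rw [hg]
  exact H.mul_mem (H.zpow_mem hm a) (H.zpow_mem hn b)

namespace ZMod

open Multiplicative

theorem ofAdd_one_zpow {n : ℕ} (z : ℤ) : ofAdd (1 : ZMod n) ^ z = ofAdd (z : ZMod n) := by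
  rw [← ofAdd_zsmul, zsmul_one]

theorem intCast_natAbs_self (z : ℤ) : (z : ZMod z.natAbs) = 0 :=
  (intCast_zmod_eq_zero_iff_dvd _ _).2 (Int.natAbs_dvd.2 dvd_rfl)

theorem intCast_natAbs_ne_zero {z n : ℤ} (hz : z ≠ 0) (h : |z| < n) :
    (z : ZMod n.natAbs) ≠ 0 := by
  rw [Ne, intCast_zmod_eq_zero_iff_dvd, Int.natAbs_dvd]
  exact fun hd => hz (Int.eq_zero_of_abs_lt_dvd hd h)

end ZMod

abbrev ZModFactor (p q : ℤ) (i : Fin 2) : Type := Multiplicative (ZMod (![p.natAbs, q.natAbs] i))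

/-- `ℤ/p ∗ ℤ/q`, the quotient of the torus knot group by its centre `⟨u^p⟩`. -/
abbrev ZModFreeProduct (p q : ℤ) : Type := Monoid.CoprodI (ZModFactor p q)

namespace TorusKnotGroup

open Monoid.CoprodI Multiplicative

variable {p q r s : ℤ}

theorem u_zpow_eq_v_zpow : u p q ^ p = v p q ^ q := by
  have hrel : PresentedGroup.mk (torusRels p q) (FreeGroup.of 0 ^ p * FreeGroup.of 1 ^ (-q)) = 1 :=
    (QuotientGroup.eq_one_iff _).2 (Subgroup.subset_normalClosure rfl)
  rwa [map_mul, map_zpow, map_zpow, zpow_neg, mul_inv_eq_one] at hrel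

theorem eq_top_of_u_mem_of_v_mem {N : Subgroup (TorusKnotGroup p q)} (hu : u p q ∈ N)
    (hv : v p q ∈ N) : N = ⊤ :=
  eq_top_iff.2 fun g _ => PresentedGroup.generated_by _ N (fun j => by fin_cases j <;> assumption) g

def lift {H : Type*} [Group H] {a b : H} (h : a ^ p = b ^ q) : TorusKnotGroup p q →* H :=
  PresentedGroup.toGroup (f := ![a, b]) <| by
    rintro _ rfl
    simp [h]

theorem lift_u {H : Type*} [Group H] {a b : H} (h : a ^ p = b ^ q) : lift h (u p q) = a :=
  PresentedGroup.toGroup.of _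

theorem lift_v {H : Type*} [Group H] {a b : H} (h : a ^ p = b ^ q) : lift h (v p q) = b :=
  PresentedGroup.toGroup.of _

theorem eq_one_of_mu_eq_one {Q : Type*} [Group Q] {U V : Q} {n : ℤ}
    (hUV : U ^ p = V ^ q) (hrs : r * p + s * q = 1)
    (hμ : U ^ s * V ^ r * (U * (U ^ s * V ^ r) ^ (-q)) ^ (-n) = 1) : U = 1 ∧ V = 1 := by
  set X := U ^ s * V ^ r with hX_def
  set t := U * X ^ (-q) with ht_def
  have hX : X = t ^ n := by rwa [zpow_neg, mul_inv_eq_one] at hμ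
  have hU : U = t ^ (n * q + 1) := by
    rw [add_comm, zpow_one_add, zpow_mul, ← hX, ht_def]
    group
  have hV : V ∈ Subgroup.zpowers t := by
    have hUt : U ∈ Subgroup.zpowers t := ⟨_, hU.symm⟩
    have hXt : X ∈ Subgroup.zpowers t := ⟨_, hX.symm⟩
    refine Subgroup.mem_of_zpow_mem_of_isCoprime (m := r) (n := q) ⟨p, s, by linarith⟩ ?_ ?_
    · have hVr : V ^ r = (U ^ s)⁻¹ * X := by rw [hX_def]; group
      rw [hVr]
      exact mul_mem (inv_mem (zpow_mem hUt s)) hXt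
    · rw [← hUV]
      exact zpow_mem hUt p
  obtain ⟨e, he⟩ := Subgroup.mem_zpowers_iff.1 hV
  have ht : t = 1 := by
    refine Subgroup.mem_bot.1 <| Subgroup.mem_of_zpow_mem_of_isCoprime
      (m := (n * q + 1) * s + e * r - n) (n := (n * q + 1) * p - e * q)
      ⟨q, r, by linear_combination (n * q + 1) * hrs⟩ ?_ ?_
    · rw [Subgroup.mem_bot, zpow_sub, zpow_add, zpow_mul, zpow_mul, ← hU, he, ← hX,
        mul_inv_eq_one, hX_def]
    · rw [Subgroup.mem_bot, zpow_sub, zpow_mul, zpow_mul, ← hU, he, hUV, mul_inv_cancel]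
  rw [hU, ← he, ht]
  exact ⟨one_zpow _, one_zpow _⟩

theorem normalClosure_μ_eq_top (hrs : r * p + s * q = 1) (n : ℤ) :
    Subgroup.normalClosure ({μ p q r s n} : Set (TorusKnotGroup p q)) = ⊤ := by
  set N := Subgroup.normalClosure ({μ p q r s n} : Set (TorusKnotGroup p q))
  have hμ : QuotientGroup.mk' N (μ p q r s n) = 1 :=
    (QuotientGroup.eq_one_iff _).2 (Subgroup.subset_normalClosure rfl)
  have hUV : QuotientGroup.mk' N (u p q) ^ p = QuotientGroup.mk' N (v p q) ^ q := by
    rw [← map_zpow, ← map_zpow, u_zpow_eq_v_zpow]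
  simp only [μ, aelt, xelt, map_mul, map_zpow] at hμ
  obtain ⟨hu, hv⟩ := eq_one_of_mu_eq_one hUV hrs hμ
  rw [QuotientGroup.mk'_apply, QuotientGroup.eq_one_iff] at hu hv
  exact eq_top_of_u_mem_of_v_mem hu hv

/-- For `q = k + 1`, the conjugate of `μ_n` whose image in `ℤ/p ∗ ℤ/q` is cyclically reduced. -/
def μCyc (p q r s : ℤ) (k n : ℕ) : TorusKnotGroup p q :=
  v p q ^ r * u p q ^ s * (v p q ^ r * xelt p q r s ^ k * u p q ^ (s - 1)) ^ n

theorem isConj_μ_μCyc {k : ℕ} (hk : q = k + 1) (n : ℕ) :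
    IsConj (μ p q r s n) (μCyc p q r s k n) := by
  have haInv : (aelt p q r s)⁻¹ = u p q ^ s * (v p q ^ r * xelt p q r s ^ k * (u p q)⁻¹) := by
    rw [aelt, hk, xelt]
    group
  have hblock : v p q ^ r * xelt p q r s ^ k * u p q ^ (s - 1) =
      v p q ^ r * xelt p q r s ^ k * (u p q)⁻¹ * u p q ^ s := by
    group
  refine isConj_iff.2 ⟨(u p q ^ s)⁻¹, ?_⟩
  rw [μCyc, hblock, mul_assoc (v p q ^ r), ← mul_pow_mul, ← haInv, μ, zpow_neg, zpow_natCast,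
    ← inv_pow, xelt]
  group

def toZModFreeProduct (p q : ℤ) : TorusKnotGroup p q →* ZModFreeProduct p q :=
  lift (a := of (M := ZModFactor p q) (i := 0) (ofAdd 1))
    (b := of (M := ZModFactor p q) (i := 1) (ofAdd 1)) <| by
    rw [← MonoidHom.map_zpow, ← MonoidHom.map_zpow, ZMod.ofAdd_one_zpow, ZMod.ofAdd_one_zpow]
    have hp : (p : ZMod (![p.natAbs, q.natAbs] 0)) = 0 := ZMod.intCast_natAbs_self p
    have hq : (q : ZMod (![p.natAbs, q.natAbs] 1)) = 0 := ZMod.intCast_natAbs_self q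
    rw [hp, hq, ofAdd_zero, ofAdd_zero, map_one, map_one]

theorem toZModFreeProduct_u_zpow (z : ℤ) :
    toZModFreeProduct p q (u p q ^ z) =
      of (M := ZModFactor p q) (i := 0) (ofAdd (z : ZMod p.natAbs)) := by
  rw [map_zpow, toZModFreeProduct, lift_u, ← MonoidHom.map_zpow, ZMod.ofAdd_one_zpow]
  rfl

theorem toZModFreeProduct_v_zpow (z : ℤ) :
    toZModFreeProduct p q (v p q ^ z) =
      of (M := ZModFactor p q) (i := 1) (ofAdd (z : ZMod q.natAbs)) := by
  rw [map_zpow, toZModFreeProduct, lift_v, ← MonoidHom.map_zpow, ZMod.ofAdd_one_zpow]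
  rfl

theorem prepends_u_zpow {z : ℤ} (hz : (z : ZMod p.natAbs) ≠ 0) :
    Prepends (toZModFreeProduct p q (u p q ^ z)) 1 0 1 := by
  rw [toZModFreeProduct_u_zpow]
  exact prepends_of (fun h => hz (ofAdd_eq_one.1 h)) (by decide)

theorem prepends_v_zpow {z : ℤ} (hz : (z : ZMod q.natAbs) ≠ 0) :
    Prepends (toZModFreeProduct p q (v p q ^ z)) 0 1 1 := by
  rw [toZModFreeProduct_v_zpow]
  exact prepends_of (fun h => hz (ofAdd_eq_one.1 h)) (by decide)

theorem prepends_μCyc (hs : (s : ZMod p.natAbs) ≠ 0) (hs' : ((s - 1 : ℤ) : ZMod p.natAbs) ≠ 0)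
    (hr : (r : ZMod q.natAbs) ≠ 0) (k n : ℕ) :
    Prepends (toZModFreeProduct p q (μCyc p q r s k n)) 0 0 (2 + n * (2 * k + 2)) := by
  rw [μCyc]
  have hv := prepends_v_zpow (p := p) hr
  have hx : Prepends (toZModFreeProduct p q (xelt p q r s)) 1 1 2 := by
    rw [xelt, map_mul]
    exact (prepends_u_zpow hs).mul hv
  have hblock := (hv.mul (hx.pow k)).mul (prepends_u_zpow (q := q) hs')
  rw [← map_pow, ← map_mul, ← map_mul] at hblock
  have hμ := (hv.mul (prepends_u_zpow hs)).mul (hblock.pow n)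
  rw [← map_pow, ← map_mul, ← map_mul] at hμ
  convert hμ using 1
  ring

theorem eq_of_isConj_μ (hrs : r * p + s * q = 1) (hr : |r| < q) (hs1 : 1 < s) (hs2 : s < p)
    {m n : ℕ} (h : IsConj (μ p q r s m) (μ p q r s n)) : m = n := by
  obtain ⟨k, rfl⟩ : ∃ k : ℕ, q = k + 1 := ⟨(q - 1).toNat, by have := abs_nonneg r; omega⟩
  have hr0 : r ≠ 0 := by rintro rfl; nlinarith
  have hr' := ZMod.intCast_natAbs_ne_zero hr0 hr
  have hs := ZMod.intCast_natAbs_ne_zero (z := s) (n := p) (by omega)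
    (by rw [abs_of_pos] <;> omega)
  have hs' := ZMod.intCast_natAbs_ne_zero (z := s - 1) (n := p) (by omega)
    (by rw [abs_of_pos] <;> omega)
  have hconj := (toZModFreeProduct _ _).map_isConj
    ((isConj_μ_μCyc rfl m).symm.trans (h.trans (isConj_μ_μCyc rfl n)))
  have hlen := (prepends_μCyc hs hs' hr' k m).eq_of_isConj (prepends_μCyc hs hs' hr' k n) hconj
  exact Nat.eq_of_mul_eq_mul_right (by omega : 0 < 2 * k + 2) (by omega)

end TorusKnotGroup

theorem torus_mu_killers_nonconjugate_general (p q r s : ℤ) (hrs : r * p + s * q = 1)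
    (hr : |r| < q) (hs1 : 1 < s) (hs2 : s < p) :
    (∀ n : ℕ, Subgroup.normalClosure ({μ p q r s n} : Set (TorusKnotGroup p q)) = ⊤) ∧
      ∀ m n : ℕ, m ≠ n → ¬ IsConj (μ p q r s m) (μ p q r s n) :=
  ⟨fun n => TorusKnotGroup.normalClosure_μ_eq_top hrs n,
    fun _ _ hmn h => hmn (TorusKnotGroup.eq_of_isConj_μ hrs hr hs1 hs2 h)⟩

theorem torus_mu_killers_nonconjugate (p q r s : ℤ) (hcop : IsCoprime p q)
    (hpq : q < p) (hq : 2 ≤ q) (hrs : r * p + s * q = 1)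
    (hr : |r| < q) (hs1 : 1 < s) (hs2 : s < p) :
    (∀ n : ℕ, Subgroup.normalClosure ({μ p q r s n} : Set (TorusKnotGroup p q)) = ⊤) ∧
      ∀ m n : ℕ, m ≠ n → ¬ IsConj (μ p q r s m) (μ p q r s n) :=
  torus_mu_killers_nonconjugate_general p q r s hrs hr hs1 hs2
end

section
/- Let m be a positive natural number, let k : Fin m → ℤ, and let ε : Fin m → ℤ satisfy ε i ∈ {1, −1} for all i and Σ_i ε i = 1. In the free group F on two generators x and a, let w = ∏_{i=0}^{m−1} x^{−k i}·a^{ε i}·x^{k i} (product taken in order of increasing i). Then for every natural number n, the normal closure of the set {w, x·a^n} in F is all of F; equivalently, in the presented group ⟨x, a | w⟩ the element x·a^n normally generates the group. -/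
/-!
Modulo the normal closure, `x = a⁻ⁿ` commutes with `a`, so every conjugate `x⁻ᵏ a^ε xᵏ` collapses
to `a^ε` and the relator `w` becomes `a ^ ∑ ε = a`. Hence `a`, and then `x = a⁻ⁿ`, die in the
quotient; as they generate `F`, the quotient is trivial.
-/

theorem List.prod_ofFn_zpow {G : Type*} [Group G] (c : G) {m : ℕ} (e : Fin m → ℤ) :
    (List.ofFn fun i => c ^ e i).prod = c ^ ∑ i, e i := by
  induction m with
  | zero => simp
  | succ m ih => simp [List.ofFn_succ, Fin.sum_univ_succ, ih, zpow_add]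

theorem Commute.prod_ofFn_conj_zpow {G : Type*} [Group G] {b c : G} (h : Commute b c) {m : ℕ}
    (k e : Fin m → ℤ) :
    (List.ofFn fun i => b ^ (-k i) * c ^ e i * b ^ k i).prod = c ^ ∑ i, e i := by
  have hconj : ∀ i, b ^ (-k i) * c ^ e i * b ^ k i = c ^ e i := fun i => by
    rw [(h.zpow_zpow (-k i) (e i)).eq, mul_assoc, ← zpow_add, neg_add_cancel, zpow_zero,
      mul_one]
  simp only [hconj, List.prod_ofFn_zpow]

theorem eq_one_of_mul_pow_eq_one_of_prod_ofFn_conj_eq_one {G : Type*} [Group G] {b c : G}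
    {n : ℕ} (hbc : b * c ^ n = 1) {m : ℕ} (k e : Fin m → ℤ) (he : ∑ i, e i = 1)
    (hw : (List.ofFn fun i => b ^ (-k i) * c ^ e i * b ^ k i).prod = 1) :
    b = 1 ∧ c = 1 := by
  have hb : b = c ^ (-(n : ℤ)) := by
    rwa [zpow_neg, zpow_natCast, eq_inv_iff_mul_eq_one]
  have hc : c = 1 := by
    rwa [(hb ▸ Commute.zpow_self c _ : Commute b c).prod_ofFn_conj_zpow, he, zpow_one] at hw
  exact ⟨by rw [hb, hc, one_zpow], hc⟩

theorem two_bridge_killers_general (m : ℕ) (k ε : Fin m → ℤ)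
    (hsum : ∑ i, ε i = 1)
    (x a : FreeGroup (Fin 2)) (hx : x = FreeGroup.of 0) (ha : a = FreeGroup.of 1)
    (w : FreeGroup (Fin 2))
    (hw : w = (List.ofFn fun i : Fin m => x ^ (-(k i)) * a ^ (ε i) * x ^ (k i)).prod) :
    ∀ n : ℕ, Subgroup.normalClosure ({w, x * a ^ n} : Set (FreeGroup (Fin 2))) = ⊤ := by
  intro n
  set N := Subgroup.normalClosure ({w, x * a ^ n} : Set (FreeGroup (Fin 2)))
  let φ := QuotientGroup.mk' N
  have hφ : ∀ g ∈ N, φ g = 1 := fun g hg => (QuotientGroup.eq_one_iff g).mpr hg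
  have hw1 : (List.ofFn fun i => φ x ^ (-k i) * φ a ^ ε i * φ x ^ k i).prod = 1 := by
    simpa [hw, map_list_prod, List.map_ofFn, Function.comp_def] using
      hφ w (Subgroup.subset_normalClosure (by simp))
  have hxa : φ x * φ a ^ n = 1 := by
    rw [← map_pow, ← map_mul]
    exact hφ _ (Subgroup.subset_normalClosure (by simp))
  obtain ⟨hx1, ha1⟩ := eq_one_of_mul_pow_eq_one_of_prod_ofFn_conj_eq_one hxa k ε hsum hw1
  have hφ1 : φ = 1 := FreeGroup.ext_hom _ _ fun i => by
    fin_cases i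
    · simpa [hx] using hx1
    · simpa [ha] using ha1
  rw [← QuotientGroup.ker_mk' N, show QuotientGroup.mk' N = 1 from hφ1, MonoidHom.ker_one]

theorem two_bridge_killers (m : ℕ) (hm : 0 < m) (k ε : Fin m → ℤ)
    (hε : ∀ i, ε i = 1 ∨ ε i = -1) (hsum : ∑ i, ε i = 1)
    (x a : FreeGroup (Fin 2)) (hx : x = FreeGroup.of 0) (ha : a = FreeGroup.of 1)
    (w : FreeGroup (Fin 2))
    (hw : w = (List.ofFn fun i : Fin m => x ^ (-(k i)) * a ^ (ε i) * x ^ (k i)).prod) :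
    ∀ n : ℕ, Subgroup.normalClosure ({w, x * a ^ n} : Set (FreeGroup (Fin 2))) = ⊤ :=
  two_bridge_killers_general m k ε hsum x a hx ha w hw
end
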